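/- Let Ω_1, Ω_2 ⊆ ℝ^N be two disjoint nonempty open sets and let 0 < q < 1. If λ_{1,q}(Ω_1) > 0 and λ_{1,q}(Ω_2) > 0, then λ_{1,q}(Ω_1 ∪ Ω_2) = ( (1/λ_{1,q}(Ω_1))^{q/(1-q)} + (1/λ_{1,q}(Ω_2))^{q/(1-q)} )^{(q-1)/q}. If instead λ_{1,q}(Ω_1) = 0 or λ_{1,q}(Ω_2) = 0, then λ_{1,q}(Ω_1 ∪ Ω_2) = 0. -/

import Mathlib

open MeasureTheory Set Filter
open scoped ENNReal

noncomputable section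

/-- `E` has smooth boundary: near each boundary point, `E` is the sublevel set of a smooth
function with non-vanishing differential. -/
def HasSmoothBoundary {N : ℕ} (E : Set (EuclideanSpace ℝ (Fin N))) : Prop :=
  ∀ x ∈ frontier E, ∃ U : Set (EuclideanSpace ℝ (Fin N)), IsOpen U ∧ x ∈ U ∧
    ∃ f : EuclideanSpace ℝ (Fin N) → ℝ, ContDiff ℝ (⊤ : ℕ∞) f ∧
      (∀ y ∈ U, (y ∈ E ↔ f y < 0)) ∧ (∀ y ∈ U, fderiv ℝ f y ≠ 0)

/-- The ratio `H^{N-1}(∂E) / |E|^{1/q}`. -/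
def cheegerRatio {N : ℕ} (q : ℝ) (E : Set (EuclideanSpace ℝ (Fin N))) : ℝ :=
  (MeasureTheory.Measure.hausdorffMeasure ((N : ℝ) - 1) (frontier E)).toReal /
    (volume E).toReal ^ (1 / q)

/-- The generalized Cheeger constant `h_q(Ω)`. -/
def cheeger {N : ℕ} (q : ℝ) (Ω : Set (EuclideanSpace ℝ (Fin N))) : ℝ :=
  sInf { r : ℝ | ∃ E : Set (EuclideanSpace ℝ (Fin N)), IsOpen E ∧ E.Nonempty ∧
    IsCompact (closure E) ∧ closure E ⊆ Ω ∧ HasSmoothBoundary E ∧ r = cheegerRatio q E }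

/-- The sharp Poincaré–Sobolev constant `λ_{p,q}(Ω)`. -/
def poincare {N : ℕ} (p q : ℝ) (Ω : Set (EuclideanSpace ℝ (Fin N))) : ℝ :=
  sInf { r : ℝ | ∃ u : EuclideanSpace ℝ (Fin N) → ℝ, ContDiff ℝ (⊤ : ℕ∞) u ∧
    HasCompactSupport u ∧ tsupport u ⊆ Ω ∧
    (∫ x in Ω, |u x| ^ q) = 1 ∧ r = ∫ x in Ω, ‖fderiv ℝ u x‖ ^ p }

/-- The inradius of `Ω`, as an extended nonnegative real. -/
def einradius {N : ℕ} (Ω : Set (EuclideanSpace ℝ (Fin N))) : ℝ≥0∞ :=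
  ⨆ x ∈ Ω, EMetric.infEdist x Ωᶜ

/-- The inradius of `Ω`, as a real number. -/
def inradius {N : ℕ} (Ω : Set (EuclideanSpace ℝ (Fin N))) : ℝ :=
  (einradius Ω).toReal

/-- The high ridge set of `Ω`. -/
def highRidge {N : ℕ} (Ω : Set (EuclideanSpace ℝ (Fin N))) : Set (EuclideanSpace ℝ (Fin N)) :=
  {x ∈ Ω | Metric.ball x (inradius Ω) ⊆ Ω}

/-- The volume of the unit ball of `ℝ^N`. -/
def ballVol (N : ℕ) : ℝ :=
  (volume (Metric.ball (0 : EuclideanSpace ℝ (Fin N)) 1)).toReal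

/-! A competitor `u` on `Ω₁ ∪ Ω₂` splits into its restrictions to the two components, which carry
the masses `t` and `1 - t` of `∫ |u|^q`; by homogeneity the restriction to `Ωᵢ` costs at least
`λ(Ωᵢ)` times its mass to the power `p/q`. Conversely, competitors on `Ω₁` and `Ω₂`, rescaled to
these masses, glue to a competitor on the union. Hence
`λ(Ω₁ ∪ Ω₂) = inf_{t ∈ [0,1]} λ(Ω₁) t^{p/q} + λ(Ω₂) (1 - t)^{p/q}`.
For `p = 1` the exponent `1/q` exceeds `1`; writing `λᵢ tᵢ^{1/q} = wᵢ (tᵢ/wᵢ)^{1/q}` with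
`wᵢ = (1/λᵢ)^{q/(1-q)}`, Jensen's inequality for `x ↦ x^{1/q}` with weights `wᵢ / (w₁ + w₂)`
gives the minimum `(w₁ + w₂)^{(q-1)/q}`, attained at `t = w₁ / (w₁ + w₂)`. -/

lemma le_csInf_mul_add_csInf_mul {s t : Set ℝ} (hs : s.Nonempty) (ht : t.Nonempty)
    (hs' : BddBelow s) (ht' : BddBelow t) {a b c : ℝ} (ha : 0 ≤ a) (hb : 0 ≤ b)
    (h : ∀ x ∈ s, ∀ y ∈ t, c ≤ x * a + y * b) : c ≤ sInf s * a + sInf t * b := by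
  rw [mul_comm, mul_comm _ b, ← smul_eq_mul, ← smul_eq_mul (a := b),
    ← Real.sInf_smul_of_nonneg ha, ← Real.sInf_smul_of_nonneg hb,
    ← csInf_add hs.smul_set (hs'.smul_of_nonneg ha) ht.smul_set (ht'.smul_of_nonneg hb)]
  refine le_csInf (hs.smul_set.add ht.smul_set) ?_
  rintro _ ⟨_, ⟨x, hx, rfl⟩, _, ⟨y, hy, rfl⟩, rfl⟩
  simpa only [smul_eq_mul, mul_comm a, mul_comm b] using h x hx y hy

lemma inv_rpow_inv_rpow_mul_self {q t : ℝ} (ht : 0 < t) (hq : q ≠ 0) :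
    (t ^ q⁻¹)⁻¹ ^ q * t = 1 := by
  rw [Real.inv_rpow (by positivity), Real.rpow_inv_rpow ht.le hq, inv_mul_cancel₀ ht.ne']

lemma isLeast_mul_div_rpow_add_mul_div_rpow {s w₁ w₂ : ℝ} (hs : 1 ≤ s) (hw₁ : 0 < w₁)
    (hw₂ : 0 < w₂) :
    IsLeast ((fun t => w₁ * (t / w₁) ^ s + w₂ * ((1 - t) / w₂) ^ s) '' Icc 0 1)
      ((w₁ + w₂) * (1 / (w₁ + w₂)) ^ s) := by
  have hS : 0 < w₁ + w₂ := by positivity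
  refine ⟨⟨w₁ / (w₁ + w₂), ⟨by positivity, div_le_one_of_le₀ (by linarith) hS.le⟩, ?_⟩, ?_⟩
  · have h1 : 1 - w₁ / (w₁ + w₂) = w₂ / (w₁ + w₂) := by field_simp; ring
    simp only [h1, div_div_cancel_left' hw₁.ne', div_div_cancel_left' hw₂.ne', ← add_mul,
      one_div]
  · rintro _ ⟨t, ⟨ht0, ht1⟩, rfl⟩
    have hJ := (convexOn_rpow hs).2 (by positivity : 0 ≤ t / w₁)
      (div_nonneg (by linarith) hw₂.le : 0 ≤ (1 - t) / w₂)
      (by positivity : 0 ≤ w₁ / (w₁ + w₂)) (by positivity : 0 ≤ w₂ / (w₁ + w₂)) (by field_simp)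
    have hmean :
        w₁ / (w₁ + w₂) * (t / w₁) + w₂ / (w₁ + w₂) * ((1 - t) / w₂) = 1 / (w₁ + w₂) := by
      field_simp; ring
    simp only [smul_eq_mul, hmean] at hJ
    calc (w₁ + w₂) * (1 / (w₁ + w₂)) ^ s
        ≤ (w₁ + w₂) *
            (w₁ / (w₁ + w₂) * (t / w₁) ^ s + w₂ / (w₁ + w₂) * ((1 - t) / w₂) ^ s) := by
          gcongr
      _ = _ := by field_simp

lemma isLeast_mul_rpow_add_mul_rpow {q l₁ l₂ : ℝ} (hq0 : 0 < q) (hq1 : q < 1)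
    (hl₁ : 0 < l₁) (hl₂ : 0 < l₂) :
    IsLeast ((fun t => l₁ * t ^ (1 / q) + l₂ * (1 - t) ^ (1 / q)) '' Icc 0 1)
      (((1 / l₁) ^ (q / (1 - q)) + (1 / l₂) ^ (q / (1 - q))) ^ ((q - 1) / q)) := by
  have hs : 1 < 1 / q := one_lt_one_div hq0 hq1
  have hw : ∀ l : ℝ, 0 < l → ∀ t : ℝ, 0 ≤ t →
      l * t ^ (1 / q) = (1 / l) ^ (q / (1 - q)) * (t / (1 / l) ^ (q / (1 - q))) ^ (1 / q) := by
    intro l hl t ht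
    have hexp : q / (1 - q) * (1 - 1 / q) = -1 := by
      field_simp [(by linarith : 1 - q ≠ 0)]
      ring
    rw [Real.div_rpow ht (by positivity), mul_div_left_comm,
      ← Real.rpow_one_sub' (by positivity) (by linarith), ← Real.rpow_mul (by positivity),
      hexp, Real.rpow_neg_one, inv_div, div_one, mul_comm]
  have hM : ∀ S : ℝ, 0 < S → S ^ ((q - 1) / q) = S * (1 / S) ^ (1 / q) := by
    intro S hS
    rw [one_div S, Real.inv_rpow hS.le, ← Real.rpow_neg hS.le,
      ← Real.rpow_one_add' hS.le (by linarith)]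
    congr 1
    field_simp
    ring
  rw [image_congr fun t ht => by rw [hw l₁ hl₁ t ht.1, hw l₂ hl₂ (1 - t) (by linarith [ht.2])],
    hM _ (by positivity)]
  exact isLeast_mul_div_rpow_add_mul_div_rpow hs.le (by positivity) (by positivity)

lemma integral_abs_smul_rpow {X : Type*} [MeasurableSpace X] {μ : Measure X} (u : X → ℝ)
    {c : ℝ} (hc : 0 ≤ c) (q : ℝ) :
    ∫ x, |(c • u) x| ^ q ∂μ = c ^ q * ∫ x, |u x| ^ q ∂μ := by
  simp_rw [Pi.smul_apply, smul_eq_mul, abs_mul, abs_of_nonneg hc,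
    Real.mul_rpow hc (abs_nonneg _)]
  exact integral_const_mul _ _

section Support

variable {X : Type*} [TopologicalSpace X]

lemma tsupport_indicator_subset_of_tsupport_subset_union {M : Type*} [Zero M]
    {Ω₁ Ω₂ : Set X} {u : X → M} (h₂ : IsOpen Ω₂)
    (hd : Disjoint Ω₁ Ω₂) (hsupp : tsupport u ⊆ Ω₁ ∪ Ω₂) :
    tsupport (Ω₁.indicator u) ⊆ Ω₁ := by
  have hclosed : IsClosed (tsupport u ∩ Ω₂ᶜ) := (isClosed_tsupport u).inter h₂.isClosed_compl
  refine (closure_minimal ?_ hclosed).trans fun x hx => (hsupp hx.1).resolve_right hx.2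
  rw [support_indicator]
  exact fun x hx => ⟨subset_tsupport u hx.2, disjoint_left.1 hd hx.1⟩

lemma hasCompactSupport_abs_rpow {u : X → ℝ} {q : ℝ} (hq : 0 < q) (hcs : HasCompactSupport u) :
    HasCompactSupport (fun x => |u x| ^ q) :=
  hcs.comp_left (g := fun y : ℝ => |y| ^ q) (by simp [Real.zero_rpow hq.ne'])

lemma integrable_abs_rpow_of_hasCompactSupport [MeasurableSpace X] [OpensMeasurableSpace X]
    {μ : Measure X} [IsFiniteMeasureOnCompacts μ] {u : X → ℝ} {q : ℝ} (hq : 0 < q)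
    (hu : Continuous u) (hcs : HasCompactSupport u) : Integrable (fun x => |u x| ^ q) μ :=
  ((Real.continuous_rpow_const hq.le).comp hu.abs).integrable_of_hasCompactSupport
    (hasCompactSupport_abs_rpow hq hcs)

end Support

section Smooth

variable {E F : Type*} [NormedAddCommGroup E] [NormedSpace ℝ E]
  [NormedAddCommGroup F] [NormedSpace ℝ F]

lemma contDiff_indicator_of_tsupport_subset_union {Ω₁ Ω₂ : Set E} {u : E → F}
    {n : WithTop ℕ∞} (h₁ : IsOpen Ω₁) (h₂ : IsOpen Ω₂) (hd : Disjoint Ω₁ Ω₂)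
    (hu : ContDiff ℝ n u) (hsupp : tsupport u ⊆ Ω₁ ∪ Ω₂) : ContDiff ℝ n (Ω₁.indicator u) := by
  refine contDiff_iff_contDiffAt.2 fun x => ?_
  by_cases hx : x ∈ Ω₁
  · exact hu.contDiffAt.congr_of_eventuallyEq
      (eventually_of_mem (h₁.mem_nhds hx) fun y hy => indicator_of_mem hy u)
  · have hx' : x ∉ tsupport (Ω₁.indicator u) :=
      fun h => hx (tsupport_indicator_subset_of_tsupport_subset_union h₂ hd hsupp h)
    exact contDiff_zero_fun.contDiffAt.congr_of_eventuallyEq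
      (notMem_tsupport_iff_eventuallyEq.1 hx')

variable [MeasurableSpace E]

lemma setIntegral_norm_fderiv_rpow_congr [OpensMeasurableSpace E]
    {μ : Measure E} {s : Set E} {u v : E → F} (hs : IsOpen s) (h : EqOn u v s) (p : ℝ) :
    ∫ x in s, ‖fderiv ℝ u x‖ ^ p ∂μ = ∫ x in s, ‖fderiv ℝ v x‖ ^ p ∂μ :=
  setIntegral_congr_fun hs.measurableSet fun x hx => by
    rw [(h.eventuallyEq_of_mem (hs.mem_nhds hx)).fderiv_eq]

lemma integral_norm_fderiv_smul_rpow {μ : Measure E} (u : E → F) {c : ℝ} (hc : 0 ≤ c) (p : ℝ) :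
    ∫ x, ‖fderiv ℝ (c • u) x‖ ^ p ∂μ = c ^ p * ∫ x, ‖fderiv ℝ u x‖ ^ p ∂μ := by
  simp_rw [fderiv_const_smul_field, Pi.smul_apply, norm_smul, Real.norm_of_nonneg hc,
    Real.mul_rpow hc (norm_nonneg _)]
  exact integral_const_mul _ _

variable [BorelSpace E] {μ : Measure E} [IsFiniteMeasureOnCompacts μ]

lemma integrable_norm_fderiv_rpow_of_hasCompactSupport {u : E → F} {p : ℝ} (hp : 0 < p)
    (hu : ContDiff ℝ 1 u) (hcs : HasCompactSupport u) :
    Integrable (fun x => ‖fderiv ℝ u x‖ ^ p) μ :=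
  ((Real.continuous_rpow_const hp.le).comp
      (hu.continuous_fderiv one_ne_zero).norm).integrable_of_hasCompactSupport
    ((hcs.fderiv ℝ).comp_left (g := fun L => ‖L‖ ^ p) (by simp [Real.zero_rpow hp.ne']))

end Smooth

section Poincare

variable {N : ℕ} {p q : ℝ} {Ω Ω₁ Ω₂ : Set (EuclideanSpace ℝ (Fin N))}
  {u : EuclideanSpace ℝ (Fin N) → ℝ}

/-- `poincare p q Ω` is by definition the infimum of this set. -/
def admissibleEnergies (p q : ℝ) (Ω : Set (EuclideanSpace ℝ (Fin N))) : Set ℝ :=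
  { r : ℝ | ∃ u : EuclideanSpace ℝ (Fin N) → ℝ, ContDiff ℝ (⊤ : ℕ∞) u ∧
    HasCompactSupport u ∧ tsupport u ⊆ Ω ∧
    (∫ x in Ω, |u x| ^ q) = 1 ∧ r = ∫ x in Ω, ‖fderiv ℝ u x‖ ^ p }

lemma nonneg_of_mem_admissibleEnergies {r : ℝ} (hr : r ∈ admissibleEnergies p q Ω) : 0 ≤ r := by
  obtain ⟨u, -, -, -, -, rfl⟩ := hr
  exact integral_nonneg fun x => by positivity

lemma bddBelow_admissibleEnergies : BddBelow (admissibleEnergies p q Ω) :=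
  ⟨0, fun _ => nonneg_of_mem_admissibleEnergies⟩

lemma poincare_nonneg : 0 ≤ poincare p q Ω :=
  Real.sInf_nonneg fun _ => nonneg_of_mem_admissibleEnergies

lemma rpow_mul_mem_admissibleEnergies (hu : ContDiff ℝ (⊤ : ℕ∞) u)
    (hcs : HasCompactSupport u) (hsupp : tsupport u ⊆ Ω) {c : ℝ} (hc : 0 ≤ c)
    (hmass : c ^ q * ∫ x in Ω, |u x| ^ q = 1) :
    c ^ p * ∫ x in Ω, ‖fderiv ℝ u x‖ ^ p ∈ admissibleEnergies p q Ω :=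
  ⟨c • u, hu.const_smul c, hcs.mono (Function.support_const_smul_subset c u),
    (closure_mono (Function.support_const_smul_subset c u)).trans hsupp,
    (integral_abs_smul_rpow u hc q).trans hmass, (integral_norm_fderiv_smul_rpow u hc p).symm⟩

lemma admissibleEnergies_nonempty (hq : 0 < q) (hΩ : IsOpen Ω) (hne : Ω.Nonempty) :
    (admissibleEnergies p q Ω).Nonempty := by
  obtain ⟨x₀, hx₀⟩ := hne
  obtain ⟨φ, hsupp, hcs, hφ, -, hφx₀⟩ :=
    exists_contDiff_tsupport_subset (n := ⊤) (hΩ.mem_nhds hx₀)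
  have hpos : 0 < ∫ x in Ω, |φ x| ^ q := by
    rw [setIntegral_eq_integral_of_forall_compl_eq_zero fun x hx => by
      rw [image_eq_zero_of_notMem_tsupport fun h => hx (hsupp h), abs_zero,
        Real.zero_rpow hq.ne']]
    exact ((Real.continuous_rpow_const hq.le).comp hφ.continuous.abs
      ).integral_pos_of_hasCompactSupport_nonneg_nonzero (hasCompactSupport_abs_rpow hq hcs)
      (fun x => by positivity) (x := x₀) (by simp [hφx₀])
  exact ⟨_, rpow_mul_mem_admissibleEnergies hφ hcs hsupp (by positivity)
    (inv_rpow_inv_rpow_mul_self hpos hq.ne')⟩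

lemma poincare_mul_rpow_le (hp : 0 < p) (hq : 0 < q) (hu : ContDiff ℝ (⊤ : ℕ∞) u)
    (hcs : HasCompactSupport u) (hsupp : tsupport u ⊆ Ω) :
    poincare p q Ω * (∫ x in Ω, |u x| ^ q) ^ (p / q) ≤ ∫ x in Ω, ‖fderiv ℝ u x‖ ^ p := by
  set t := ∫ x in Ω, |u x| ^ q with ht_def
  rcases (integral_nonneg fun x => by positivity : 0 ≤ t).eq_or_lt with ht | ht
  · rw [ht_def, ← ht, Real.zero_rpow (div_pos hp hq).ne', mul_zero]
    exact integral_nonneg fun x => by positivity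
  · have hs : 0 < t ^ q⁻¹ := by positivity
    have hle := csInf_le bddBelow_admissibleEnergies (rpow_mul_mem_admissibleEnergies (p := p)
      hu hcs hsupp (inv_nonneg.2 hs.le) (inv_rpow_inv_rpow_mul_self ht hq.ne'))
    calc poincare p q Ω * t ^ (p / q)
        ≤ ((t ^ q⁻¹)⁻¹ ^ p * ∫ x in Ω, ‖fderiv ℝ u x‖ ^ p) * (t ^ q⁻¹) ^ p := by
          rw [← Real.rpow_mul ht.le, inv_mul_eq_div]
          gcongr
          exact hle
      _ = ∫ x in Ω, ‖fderiv ℝ u x‖ ^ p := by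
          rw [Real.inv_rpow hs.le, mul_comm, ← mul_assoc, mul_inv_cancel₀ (by positivity),
            one_mul]

lemma poincare_mul_rpow_le_of_tsupport_subset_union (hp : 0 < p) (hq : 0 < q)
    (h₁ : IsOpen Ω₁) (h₂ : IsOpen Ω₂) (hd : Disjoint Ω₁ Ω₂) (hu : ContDiff ℝ (⊤ : ℕ∞) u)
    (hcs : HasCompactSupport u) (hsupp : tsupport u ⊆ Ω₁ ∪ Ω₂) :
    poincare p q Ω₁ * (∫ x in Ω₁, |u x| ^ q) ^ (p / q) ≤ ∫ x in Ω₁, ‖fderiv ℝ u x‖ ^ p := by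
  have heq : EqOn (Ω₁.indicator u) u Ω₁ := fun x hx => indicator_of_mem hx u
  have h := poincare_mul_rpow_le hp hq
    (contDiff_indicator_of_tsupport_subset_union h₁ h₂ hd hu hsupp)
    (hcs.mono (by rw [support_indicator]; exact inter_subset_right))
    (tsupport_indicator_subset_of_tsupport_subset_union h₂ hd hsupp)
  rwa [setIntegral_congr_fun h₁.measurableSet fun x hx => by rw [heq hx],
    setIntegral_norm_fderiv_rpow_congr h₁ heq] at h

lemma mem_admissibleEnergies_union (hp : 0 < p) (hq : 0 < q) (h₁ : IsOpen Ω₁)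
    (h₂ : IsOpen Ω₂) (hd : Disjoint Ω₁ Ω₂) {r₁ r₂ t : ℝ} (ht : t ∈ Icc (0 : ℝ) 1)
    (hr₁ : r₁ ∈ admissibleEnergies p q Ω₁) (hr₂ : r₂ ∈ admissibleEnergies p q Ω₂) :
    r₁ * t ^ (p / q) + r₂ * (1 - t) ^ (p / q) ∈ admissibleEnergies p q (Ω₁ ∪ Ω₂) := by
  obtain ⟨u₁, hu₁, hcs₁, hsupp₁, hmass₁, rfl⟩ := hr₁
  obtain ⟨u₂, hu₂, hcs₂, hsupp₂, hmass₂, rfl⟩ := hr₂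
  have hweight : ∀ s : ℝ, 0 ≤ s → (s ^ q⁻¹) ^ q = s ∧ (s ^ q⁻¹) ^ p = s ^ (p / q) :=
    fun s hs => ⟨Real.rpow_inv_rpow hs hq.ne', by rw [← Real.rpow_mul hs, inv_mul_eq_div]⟩
  obtain ⟨ha, hb⟩ : 0 ≤ t ∧ 0 ≤ 1 - t := ⟨ht.1, sub_nonneg.2 ht.2⟩
  set a := t ^ q⁻¹
  set b := (1 - t) ^ q⁻¹
  set u := a • u₁ + b • u₂
  have heq₁ : EqOn u (a • u₁) Ω₁ := fun x hx => by
    simp [u, image_eq_zero_of_notMem_tsupport fun h => disjoint_left.1 hd hx (hsupp₂ h)]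
  have heq₂ : EqOn u (b • u₂) Ω₂ := fun x hx => by
    simp [u, image_eq_zero_of_notMem_tsupport fun h => disjoint_left.1 hd (hsupp₁ h) hx]
  have hu : ContDiff ℝ (⊤ : ℕ∞) u := (hu₁.const_smul a).add (hu₂.const_smul b)
  have hcs : HasCompactSupport u :=
    (hcs₁.mono (Function.support_const_smul_subset a u₁)).add
      (hcs₂.mono (Function.support_const_smul_subset b u₂))
  have hi := integrable_abs_rpow_of_hasCompactSupport (μ := volume) hq hu.continuous hcs
  have hg := integrable_norm_fderiv_rpow_of_hasCompactSupport (μ := volume) hp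
    (hu.of_le (by simp)) hcs
  refine ⟨u, hu, hcs, (tsupport_add _ _).trans (union_subset_union
    ((closure_mono (Function.support_const_smul_subset a u₁)).trans hsupp₁)
    ((closure_mono (Function.support_const_smul_subset b u₂)).trans hsupp₂)), ?_, ?_⟩
  · rw [setIntegral_union hd h₂.measurableSet hi.integrableOn hi.integrableOn,
      setIntegral_congr_fun h₁.measurableSet fun x hx => by rw [heq₁ hx],
      setIntegral_congr_fun h₂.measurableSet fun x hx => by rw [heq₂ hx],
      integral_abs_smul_rpow _ (by positivity), integral_abs_smul_rpow _ (by positivity),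
      hmass₁, hmass₂, (hweight t ha).1, (hweight _ hb).1]
    ring
  · rw [setIntegral_union hd h₂.measurableSet hg.integrableOn hg.integrableOn,
      setIntegral_norm_fderiv_rpow_congr h₁ heq₁, setIntegral_norm_fderiv_rpow_congr h₂ heq₂,
      integral_norm_fderiv_smul_rpow _ (by positivity),
      integral_norm_fderiv_smul_rpow _ (by positivity), (hweight t ha).2, (hweight _ hb).2]
    ring

lemma poincare_union_le (hp : 0 < p) (hq : 0 < q) (h₁ : IsOpen Ω₁) (h₂ : IsOpen Ω₂)
    (hne₁ : Ω₁.Nonempty) (hne₂ : Ω₂.Nonempty) (hd : Disjoint Ω₁ Ω₂) {t : ℝ}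
    (ht : t ∈ Icc (0 : ℝ) 1) :
    poincare p q (Ω₁ ∪ Ω₂) ≤
      poincare p q Ω₁ * t ^ (p / q) + poincare p q Ω₂ * (1 - t) ^ (p / q) :=
  le_csInf_mul_add_csInf_mul (admissibleEnergies_nonempty hq h₁ hne₁)
    (admissibleEnergies_nonempty hq h₂ hne₂) bddBelow_admissibleEnergies
    bddBelow_admissibleEnergies (Real.rpow_nonneg ht.1 _) (Real.rpow_nonneg (sub_nonneg.2 ht.2) _)
    fun _ hr₁ _ hr₂ => csInf_le bddBelow_admissibleEnergies
      (mem_admissibleEnergies_union hp hq h₁ h₂ hd ht hr₁ hr₂)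

lemma le_poincare_union (hp : 0 < p) (hq : 0 < q) (h₁ : IsOpen Ω₁) (h₂ : IsOpen Ω₂)
    (hne₁ : Ω₁.Nonempty) (hd : Disjoint Ω₁ Ω₂) {c : ℝ}
    (hc : ∀ t ∈ Icc (0 : ℝ) 1,
      c ≤ poincare p q Ω₁ * t ^ (p / q) + poincare p q Ω₂ * (1 - t) ^ (p / q)) :
    c ≤ poincare p q (Ω₁ ∪ Ω₂) := by
  refine le_csInf (admissibleEnergies_nonempty hq (h₁.union h₂) (hne₁.mono subset_union_left)) ?_
  rintro _ ⟨u, hu, hcs, hsupp, hmass, rfl⟩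
  have hi := integrable_abs_rpow_of_hasCompactSupport (μ := volume) hq hu.continuous hcs
  have hg := integrable_norm_fderiv_rpow_of_hasCompactSupport (μ := volume) hp
    (hu.of_le (by simp)) hcs
  have hmass₂ : ∫ x in Ω₂, |u x| ^ q = 1 - ∫ x in Ω₁, |u x| ^ q := by
    rw [← hmass, setIntegral_union hd h₂.measurableSet hi.integrableOn hi.integrableOn]
    ring
  have ht : ∫ x in Ω₁, |u x| ^ q ∈ Icc (0 : ℝ) 1 :=
    ⟨integral_nonneg fun x => by positivity,
      sub_nonneg.1 (hmass₂ ▸ integral_nonneg fun x => by positivity)⟩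
  rw [setIntegral_union hd h₂.measurableSet hg.integrableOn hg.integrableOn]
  refine (hc _ ht).trans (add_le_add ?_ ?_)
  · exact poincare_mul_rpow_le_of_tsupport_subset_union hp hq h₁ h₂ hd hu hcs hsupp
  · rw [← hmass₂]
    exact poincare_mul_rpow_le_of_tsupport_subset_union hp hq h₂ h₁ hd.symm hu hcs
      (union_comm Ω₁ Ω₂ ▸ hsupp)

theorem isGLB_poincare_union (hp : 0 < p) (hq : 0 < q) (h₁ : IsOpen Ω₁) (h₂ : IsOpen Ω₂)
    (hne₁ : Ω₁.Nonempty) (hne₂ : Ω₂.Nonempty) (hd : Disjoint Ω₁ Ω₂) :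
    IsGLB ((fun t => poincare p q Ω₁ * t ^ (p / q) + poincare p q Ω₂ * (1 - t) ^ (p / q)) ''
      Icc 0 1) (poincare p q (Ω₁ ∪ Ω₂)) :=
  ⟨forall_mem_image.2 fun _ ht => poincare_union_le hp hq h₁ h₂ hne₁ hne₂ hd ht,
    fun _ hc => le_poincare_union hp hq h₁ h₂ hne₁ hd fun _ ht => hc (mem_image_of_mem _ ht)⟩

end Poincare

/-- for disjoint nonempty open sets and `0 < q < 1`: if both
`λ_{1,q}(Ω₁) > 0` and `λ_{1,q}(Ω₂) > 0` then
`λ_{1,q}(Ω₁ ∪ Ω₂) = ((1/λ_{1,q}(Ω₁))^{q/(1-q)} + (1/λ_{1,q}(Ω₂))^{q/(1-q)})^{(q-1)/q}`;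
if `λ_{1,q}(Ω₁) = 0` or `λ_{1,q}(Ω₂) = 0` then `λ_{1,q}(Ω₁ ∪ Ω₂) = 0`. -/
theorem statement_7 (N : ℕ) (Ω₁ Ω₂ : Set (EuclideanSpace ℝ (Fin N)))
    (h₁ : IsOpen Ω₁) (h₂ : IsOpen Ω₂) (hne₁ : Ω₁.Nonempty) (hne₂ : Ω₂.Nonempty)
    (hdisj : Disjoint Ω₁ Ω₂) (q : ℝ) (hq0 : 0 < q) (hq1 : q < 1) :
    (0 < poincare 1 q Ω₁ → 0 < poincare 1 q Ω₂ →
      poincare 1 q (Ω₁ ∪ Ω₂) =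
        ((1 / poincare 1 q Ω₁) ^ (q / (1 - q)) +
            (1 / poincare 1 q Ω₂) ^ (q / (1 - q))) ^ ((q - 1) / q)) ∧
    (poincare 1 q Ω₁ = 0 ∨ poincare 1 q Ω₂ = 0 → poincare 1 q (Ω₁ ∪ Ω₂) = 0) := by
  have hglb := isGLB_poincare_union one_pos hq0 h₁ h₂ hne₁ hne₂ hdisj
  have hq : (1 : ℝ) / q ≠ 0 := by positivity
  refine ⟨fun hp₁ hp₂ => hglb.unique (isLeast_mul_rpow_add_mul_rpow hq0 hq1 hp₁ hp₂).isGLB, ?_⟩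
  rintro (h | h)
  · have := hglb.1 (mem_image_of_mem _ (right_mem_Icc.2 zero_le_one))
    simp only [h, sub_self, Real.zero_rpow hq] at this
    exact le_antisymm (by simpa using this) poincare_nonneg
  · have := hglb.1 (mem_image_of_mem _ (left_mem_Icc.2 zero_le_one))
    simp only [h, Real.zero_rpow hq] at this
    exact le_antisymm (by simpa using this) poincare_nonneg

end
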